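/- Fix a finite digraph G on a finite vertex set V, a distinguished vertex L (the leader), a real number p, and let R be the unique function satisfying the redemption-premium recurrence. Then for every pair (q, v) in the domain of R, R(q, v) = p · N(q, v), where N(q, v) is the number of finite sequences (w_k, …, w_1, w_0) of vertices with k ≥ 0, w_0 = v, (w_{i+1}, w_i) an arc of G for each 0 ≤ i < k, and such that the concatenated sequence (w_k, …, w_0)||q (identifying the repeated vertex v) is a forward path or a forward cycle in G. In particular, R(q, v) is p times a count of paths in G, so each redemption premium is proportional to the number of paths in the digraph. -/

import Mathlib

/-!
A digraph on a finite vertex set `V` is given by its arc relation `A : V → V → Prop`,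
where arcs are ordered pairs of *distinct* vertices (irreflexivity hypothesis `hirr`).
A forward path is a nonempty list of pairwise-distinct vertices in which consecutive
vertices are joined by arcs; a forward cycle is such a list whose first and last
vertices coincide, all other vertices being pairwise distinct.
-/

/-- `l` is a forward path in the digraph with arc relation `A`. -/
def IsFwdPath {V : Type*} (A : V → V → Prop) (l : List V) : Prop :=
  l ≠ [] ∧ l.Nodup ∧ l.IsChain A

/-- `l` is a forward cycle in the digraph with arc relation `A`:
it has length at least 2 (`k ≥ 1`), its first and last vertices coincide,
all other vertices are pairwise distinct, and consecutive vertices are joined by arcs. -/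
def IsFwdCycle {V : Type*} (A : V → V → Prop) (l : List V) : Prop :=
  2 ≤ l.length ∧ l.head? = l.getLast? ∧ l.dropLast.Nodup ∧ l.IsChain A

instance {V : Type*} (A : V → V → Prop) [DecidableEq V] [DecidableRel A] (l : List V) :
    Decidable (IsFwdPath A l) := by unfold IsFwdPath; infer_instance

instance {V : Type*} (A : V → V → Prop) [DecidableEq V] [DecidableRel A] (l : List V) :
    Decidable (IsFwdCycle A l) := by unfold IsFwdCycle; infer_instance

/-- The domain of the redemption-premium function `R`: pairs `(q, v)` where `q` is a
forward path ending at the leader `L` and `v || q` (i.e. `v :: q`) is a forward path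
or a forward cycle. -/
def RDom {V : Type*} (A : V → V → Prop) (L : V) (q : List V) (v : V) : Prop :=
  IsFwdPath A q ∧ q.getLast? = some L ∧ (IsFwdPath A (v :: q) ∨ IsFwdCycle A (v :: q))

/-- `R` satisfies the redemption-premium recurrence on its domain:
`R(q, v) = p` if `v || q` is a forward cycle, and
`R(q, v) = p + Σ_u R(v || q, u)` if `v || q` is a forward path, the sum ranging over
vertices `u` with `(u, v)` an arc and `u || (v || q)` a forward path or forward cycle. -/
def SatisfiesRRec {V : Type*} [Fintype V] [DecidableEq V] (A : V → V → Prop)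
    [DecidableRel A] (L : V) (p : ℝ) (R : List V → V → ℝ) : Prop :=
  ∀ q v, RDom A L q v →
    (IsFwdCycle A (v :: q) → R q v = p) ∧
    (IsFwdPath A (v :: q) →
      R q v = p + ∑ u ∈ Finset.univ.filter
          (fun u => A u v ∧ (IsFwdPath A (u :: v :: q) ∨ IsFwdCycle A (u :: v :: q))),
          R (v :: q) u)

/-!
Peel off the vertex just before `v`: a sequence counted by `N(q, v)` is either `[v]` or
`m ++ [v]` with `m` counted by `N(v || q, u)`, `u` the last vertex of `m`. Such a `u` automatically
satisfies the side condition of the recurrence, because removing a nonempty prefix from a forward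
path or cycle leaves a forward path. Hence `N` obeys the recurrence of `R / p`; on a forward cycle
`v || q` only `[v]` survives, since a forward cycle is never a forward path. Induction on
`|V| - length q` (forward paths have at most `|V|` vertices) gives `R = p · N`.
-/

section

variable {V : Type*} {A : V → V → Prop}

lemma IsFwdCycle.not_isFwdPath {l : List V} (hc : IsFwdCycle A l) : ¬ IsFwdPath A l := by
  rintro ⟨-, hnd, -⟩
  obtain ⟨hlen, hends, -, -⟩ := hc
  rcases l with _ | ⟨a, _ | ⟨b, t⟩⟩
  · simp at hlen
  · simp at hlen
  · exact (List.nodup_cons.mp hnd).1 (List.mem_of_getLast? (by simpa using hends.symm))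

lemma IsFwdPath.of_append_right {m s : List V} (h : IsFwdPath A (m ++ s)) (hs : s ≠ []) :
    IsFwdPath A s :=
  ⟨hs, h.2.1.sublist (List.sublist_append_right m s), h.2.2.right_of_append⟩

lemma IsFwdCycle.isFwdPath_of_append {m s : List V} (h : IsFwdCycle A (m ++ s))
    (hm : m ≠ []) (hs : s ≠ []) : IsFwdPath A s := by
  obtain ⟨-, hends, hnd, hchain⟩ := h
  obtain ⟨a, ha⟩ : ∃ a, s.getLast? = some a := Option.isSome_iff_exists.mp (by simpa)
  rw [List.dropLast_append_of_ne_nil hs] at hnd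
  rw [List.head?_append_of_ne_nil _ hm, List.getLast?_append_of_ne_nil _ hs, ha] at hends
  have hdisj := List.disjoint_of_nodup_append hnd
  refine ⟨hs, ?_, hchain.right_of_append⟩
  rw [← List.dropLast_append_getLast? a ha]
  exact (hnd.sublist (List.sublist_append_right _ _)).append (List.nodup_singleton a)
    (by simpa using fun h => hdisj (List.mem_of_head? hends) h)

lemma isFwdPath_of_append {m s : List V} (h : IsFwdPath A (m ++ s) ∨ IsFwdCycle A (m ++ s))
    (hm : m ≠ []) (hs : s ≠ []) : IsFwdPath A s :=
  h.elim (·.of_append_right hs) (·.isFwdPath_of_append hm hs)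

lemma length_le_card_add_one_of_isFwdPath_or_isFwdCycle [Fintype V] {l : List V}
    (h : IsFwdPath A l ∨ IsFwdCycle A l) : l.length ≤ Fintype.card V + 1 := by
  rcases h with ⟨-, hnd, -⟩ | ⟨-, -, hnd, -⟩
  · exact hnd.length_le_card.trans (Nat.le_succ _)
  · simpa using hnd.length_le_card

variable (A) in
/-- The sequences `(w_k, …, w_0)` counted by `N(q, v)`, as lists `[w_k, …, w_0]`. -/
def pathExtensions (q : List V) (v : V) : Set (List V) :=
  {l | l ≠ [] ∧ l.getLast? = some v ∧ l.IsChain A ∧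
    (IsFwdPath A (l ++ q) ∨ IsFwdCycle A (l ++ q))}

lemma pathExtensions_finite [Finite V] (q : List V) (v : V) :
    (pathExtensions A q v).Finite := by
  have := Fintype.ofFinite V
  refine (List.finite_length_le V (Fintype.card V + 1)).subset fun l hl => ?_
  have := length_le_card_add_one_of_isFwdPath_or_isFwdCycle hl.2.2.2
  simp only [List.length_append] at this
  exact le_of_add_le_left this

lemma pathExtensions_disjoint {q : List V} {u u' : V} (h : u ≠ u') :
    Disjoint (pathExtensions A q u) (pathExtensions A q u') :=
  Set.disjoint_left.mpr fun _ hl hl' => h (Option.some_injective _ (hl.2.1.symm.trans hl'.2.1))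

lemma singleton_mem_pathExtensions {q : List V} {v : V}
    (h : IsFwdPath A (v :: q) ∨ IsFwdCycle A (v :: q)) : [v] ∈ pathExtensions A q v :=
  ⟨List.cons_ne_nil _ _, rfl, List.isChain_singleton v, h⟩

lemma append_singleton_mem_pathExtensions {q m : List V} {u v : V}
    (hm : m ∈ pathExtensions A (v :: q) u) : m ++ [v] ∈ pathExtensions A q v := by
  obtain ⟨-, -, -, h⟩ := hm
  rw [← List.singleton_append, ← List.append_assoc] at h
  exact ⟨by simp, by simp, (h.elim (·.2.2) (·.2.2.2)).left_of_append, h⟩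

lemma arc_and_cons_of_mem_pathExtensions_cons {q m : List V} {u v : V}
    (hm : m ∈ pathExtensions A (v :: q) u) :
    A u v ∧ (IsFwdPath A (u :: v :: q) ∨ IsFwdCycle A (u :: v :: q)) := by
  obtain ⟨-, hlast, -, h⟩ := hm
  rw [← List.dropLast_append_getLast? u hlast, List.append_assoc, List.singleton_append] at h
  refine ⟨(List.isChain_cons_cons.mp (h.elim (·.2.2) (·.2.2.2)).right_of_append).1, ?_⟩
  by_cases hm' : m.dropLast = []
  · simpa [hm'] using h
  · exact Or.inl (isFwdPath_of_append h hm' (List.cons_ne_nil _ _))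

lemma eq_singleton_or_exists_append_of_mem_pathExtensions {q l : List V} {v : V}
    (hl : l ∈ pathExtensions A q v) :
    l = [v] ∨ ∃ u, ∃ m ∈ pathExtensions A (v :: q) u, m ++ [v] = l := by
  obtain ⟨-, hlast, hchain, h⟩ := hl
  have hsplit := List.dropLast_append_getLast? v hlast
  by_cases hm : l.dropLast = []
  · rw [← hsplit, hm]
    exact Or.inl rfl
  refine Or.inr ⟨_, l.dropLast, ⟨hm, List.getLast?_eq_some_getLast hm,
    hchain.prefix (List.dropLast_prefix l), ?_⟩, hsplit⟩
  rwa [← List.singleton_append, ← List.append_assoc, hsplit]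

lemma pathExtensions_eq_singleton_of_isFwdCycle {q : List V} {v : V}
    (hc : IsFwdCycle A (v :: q)) : pathExtensions A q v = {[v]} := by
  refine Set.eq_singleton_iff_unique_mem.mpr ⟨singleton_mem_pathExtensions (Or.inr hc), ?_⟩
  intro l hl
  obtain h | ⟨u, m, hm, rfl⟩ := eq_singleton_or_exists_append_of_mem_pathExtensions hl
  · exact h
  · obtain ⟨hne, -, -, h⟩ := hm
    exact absurd (isFwdPath_of_append h hne (List.cons_ne_nil _ _)) hc.not_isFwdPath

lemma RDom.cons {L : V} {q : List V} {u v : V} (hqv : RDom A L q v) (hp : IsFwdPath A (v :: q))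
    (hu : IsFwdPath A (u :: v :: q) ∨ IsFwdCycle A (u :: v :: q)) : RDom A L (v :: q) u := by
  obtain ⟨⟨hq, -, -⟩, hL, -⟩ := hqv
  obtain ⟨a, t, rfl⟩ := List.exists_cons_of_ne_nil hq
  exact ⟨hp, by rwa [List.getLast?_cons_cons], hu⟩

variable [Fintype V] [DecidableEq V] [DecidableRel A]

lemma pathExtensions_eq_insert_biUnion {q : List V} {v : V} (hp : IsFwdPath A (v :: q)) :
    pathExtensions A q v = insert [v] (⋃ u ∈ (Finset.univ.filter fun u =>
      A u v ∧ (IsFwdPath A (u :: v :: q) ∨ IsFwdCycle A (u :: v :: q)) : Set V),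
        (· ++ [v]) '' pathExtensions A (v :: q) u) := by
  ext l
  constructor
  · intro hl
    obtain rfl | ⟨u, m, hm, rfl⟩ := eq_singleton_or_exists_append_of_mem_pathExtensions hl
    · exact Set.mem_insert _ _
    · have hu := arc_and_cons_of_mem_pathExtensions_cons hm
      exact Set.mem_insert_of_mem _
        (Set.mem_biUnion (by simpa using hu) (Set.mem_image_of_mem _ hm))
  · rintro (rfl | hl)
    · exact singleton_mem_pathExtensions (Or.inl hp)
    · obtain ⟨u, -, m, hm, rfl⟩ := Set.mem_iUnion₂.mp hl
      exact append_singleton_mem_pathExtensions hm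

lemma ncard_pathExtensions_of_isFwdPath {q : List V} {v : V} (hp : IsFwdPath A (v :: q)) :
    (pathExtensions A q v).ncard = 1 + ∑ u ∈ Finset.univ.filter (fun u =>
      A u v ∧ (IsFwdPath A (u :: v :: q) ∨ IsFwdCycle A (u :: v :: q))),
        (pathExtensions A (v :: q) u).ncard := by
  have hinj : Function.Injective (· ++ [v] : List V → List V) := List.append_left_injective _
  have hnotMem (u : V) : [v] ∉ (· ++ [v]) '' pathExtensions A (v :: q) u := by
    rintro ⟨m, hm, h⟩
    exact hm.1 (List.append_left_eq_self.mp h)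
  have hfinite (u : V) : ((· ++ [v]) '' pathExtensions A (v :: q) u).Finite :=
    (pathExtensions_finite _ _).image _
  rw [pathExtensions_eq_insert_biUnion hp,
    Set.ncard_insert_of_notMem
      (by simpa only [Set.mem_iUnion, not_exists] using fun u _ => hnotMem u)
      ((Finset.finite_toSet _).biUnion fun u _ => hfinite u),
    add_comm, Set.Finite.ncard_biUnion (Finset.finite_toSet _) (fun u _ => hfinite u)
      (fun u _ u' _ h => (Set.disjoint_image_iff hinj).mpr (pathExtensions_disjoint h)),
    finsum_mem_coe_finset]
  simp only [Set.ncard_image_of_injective _ hinj]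

theorem SatisfiesRRec.eq_mul_ncard {L : V} {p : ℝ} {R : List V → V → ℝ}
    (hR : SatisfiesRRec A L p R) (q : List V) (v : V) (hqv : RDom A L q v) :
    R q v = p * (pathExtensions A q v).ncard := by
  rcases hqv.2.2 with hp | hc
  · rw [(hR q v hqv).2 hp, ncard_pathExtensions_of_isFwdPath hp]
    push_cast
    rw [mul_add, mul_one, Finset.mul_sum]
    refine congrArg (p + ·) (Finset.sum_congr rfl fun u hu => ?_)
    exact hR.eq_mul_ncard (v :: q) u (hqv.cons hp (Finset.mem_filter.mp hu).2.2)
  · rw [(hR q v hqv).1 hc, pathExtensions_eq_singleton_of_isFwdCycle hc, Set.ncard_singleton,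
      Nat.cast_one, mul_one]
termination_by Fintype.card V - q.length
decreasing_by
  have := hp.2.1.length_le_card
  simp only [List.length_cons] at this ⊢
  omega

end

theorem redemption_premium_eq_path_count_general {V : Type*} [Fintype V] [DecidableEq V]
    (A : V → V → Prop) [DecidableRel A] (L : V) (p : ℝ)
    (R : List V → V → ℝ) (hR : SatisfiesRRec A L p R)
    (q : List V) (v : V) (hqv : RDom A L q v) :
    R q v = p * Nat.card {l : List V // l ≠ [] ∧ l.getLast? = some v ∧ l.IsChain A ∧
      (IsFwdPath A (l ++ q) ∨ IsFwdCycle A (l ++ q))} := by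
  rw [hR.eq_mul_ncard q v hqv, ← Nat.card_coe_set_eq]
  rfl

/-- If `R` satisfies the redemption-premium recurrence, then for every
pair `(q, v)` in its domain, `R(q, v) = p · N(q, v)`, where `N(q, v)` is the number of
finite sequences `(w_k, …, w_1, w_0)` of vertices (modelled as nonempty lists
`l = [w_k, …, w_0]`) with `w_0 = v`, `(w_{i+1}, w_i)` an arc for each `0 ≤ i < k`, and
such that the concatenation `(w_k, …, w_0) || q` (identifying the repeated vertex `v`,
i.e. the list `l ++ q`) is a forward path or a forward cycle. -/
theorem redemption_premium_eq_path_count {V : Type*} [Fintype V] [DecidableEq V]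
    (A : V → V → Prop) [DecidableRel A] (hirr : ∀ u, ¬ A u u) (L : V) (p : ℝ)
    (R : List V → V → ℝ) (hR : SatisfiesRRec A L p R)
    (q : List V) (v : V) (hqv : RDom A L q v) :
    R q v = p * Nat.card {l : List V // l ≠ [] ∧ l.getLast? = some v ∧ l.IsChain A ∧
      (IsFwdPath A (l ++ q) ∨ IsFwdCycle A (l ++ q))} :=
  redemption_premium_eq_path_count_general A L p R hR q v hqv
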